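/- For all ordinals α, β below ε₀ and all k, if α mesh with ω_{x+2} (i.e., every exponent in the Cantor normal form of α is less than ω_{x+1}, so that ω_{x+2} + α is in Cantor normal form) and β <_k α, then ω_{x+2} + β <_k ω_{x+2} + α. -/
import Mathlib


namespace SlowCon

open ONote

/-- Fast-growing hierarchy with `F_{α+1}(n) = F_α^[n+1](n)`, standard fundamental sequences. -/
def F : ONote → ℕ → ℕ
  | o =>
    match fundamentalSequence o, fundamentalSequence_has_prop o with
    | Sum.inl none, _ => fun n => n + 1
    | Sum.inl (some a), h =>
      have : a < o := by rw [ONote.lt_def, h.1]; exact Order.lt_succ _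
      fun n => (F a)^[n + 1] n
    | Sum.inr f, h => fun n =>
      have : f n < o := (h.2.1 n).2.1
      F (f n) n
  termination_by o => o

/-- The `k`-th member of the fundamental sequence (predecessor at successors, `0` at `0`). -/
def fs (o : ONote) (k : ℕ) : ONote :=
  match fundamentalSequence o with
  | Sum.inl none => 0
  | Sum.inl (some a) => a
  | Sum.inr f => f k

/-- `stepDown k a b` : one can descend from `b` to `a` via `k`-th members of
fundamental sequences (at least one step). -/
def stepDown (k : ℕ) (a b : ONote) : Prop :=
  Relation.TransGen (fun x y => y ≠ 0 ∧ x = fs y k) a b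

/-- Tower of ω's: `wtower 0 = 1`, `wtower (n+1) = ω ^ wtower n`. -/
def wtower : ℕ → ONote
  | 0 => 1
  | n + 1 => ONote.oadd (wtower n) 1 0

/-- `F_{ε₀}(n) := F_{ω_{n+1}}(n)`. -/
def Feps (n : ℕ) : ℕ := F (wtower (n + 1)) n

/-- Ordinals `≤ ε₀`: `none` stands for `ε₀`, `some a` for `a < ε₀`. -/
def fsE : Option ONote → ℕ → Option ONote
  | none, k => some (wtower (k + 1))
  | some a, k => some (fs a k)

/-- Step-down relation on ordinals `≤ ε₀` (with `{ε₀}(k) = ω_{k+1}`). -/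
def stepDownE (k : ℕ) (a b : Option ONote) : Prop :=
  Relation.TransGen (fun x y => y ≠ some 0 ∧ x = fsE y k) a b

/-- Fast-growing hierarchy at indices `≤ ε₀`. -/
def FE : Option ONote → ℕ → ℕ
  | none, n => Feps n
  | some a, n => F a n

/-- Normal form for indices `≤ ε₀`. -/
def NFE : Option ONote → Prop
  | none => True
  | some a => a.NF

end SlowCon

namespace SlowCon

open ONote

/-- `iterRel G j x y` : `y` is obtained from `x` by `j` applications of the graph `G`. -/
def iterRel (G : ℕ → ℕ → Prop) : ℕ → ℕ → ℕ → Prop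
  | 0, x, y => y = x
  | j + 1, x, y => ∃ z, iterRel G j x z ∧ G z y

/-- Graph relation of the fast-growing hierarchy: `FRel α x y` means `F_α(x) = y`. -/
def FRel : ONote → ℕ → ℕ → Prop
  | o =>
    match fundamentalSequence o, fundamentalSequence_has_prop o with
    | Sum.inl none, _ => fun x y => y = x + 1
    | Sum.inl (some a), h =>
      have : a < o := by rw [ONote.lt_def, h.1]; exact Order.lt_succ _
      fun x y => iterRel (FRel a) (x + 1) x y
    | Sum.inr f, h => fun x y =>
      have : f x < o := (h.2.1 x).2.1
      FRel (f x) x y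
  termination_by o => o

/-- Graph relation for indices `≤ ε₀`, with `F_{ε₀}(x) = F_{ω_{x+1}}(x)`. -/
def FRelE : Option ONote → ℕ → ℕ → Prop
  | none, x, y => FRel (wtower (x + 1)) x y
  | some a, x, y => FRel a x y

/-- `OltE a b` : `a < b` among ordinals `≤ ε₀` (`none` = `ε₀`). -/
def OltE : Option ONote → Option ONote → Prop
  | some x, some y => x < y
  | some _, none => True
  | none, _ => False

/-- Finite levels of the fast-growing hierarchy. -/
def Ffin : ℕ → ℕ → ℕ
  | 0 => fun m => m + 1
  | k + 1 => fun m => (Ffin k)^[m + 1] m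

/-- `tower x α = ω_x^α` : `x`-fold exponential tower over `α`. -/
def tower : ℕ → ONote → ONote
  | 0, a => a
  | k + 1, a => ONote.oadd (tower k a) 1 0

/-- Progressiveness of a predicate on ordinal notations below ε₀. -/
def ProgO (Q : ONote → Prop) : Prop := ∀ a : ONote, (∀ b < a, Q b) → Q a

/-- Transfinite induction up to `α` for `Q`. -/
def TIO (α : ONote) (Q : ONote → Prop) : Prop := ProgO Q → ∀ β < α, Q β

open Classical in
/-- `FepsInv x` : the largest `z ≤ x` with `F_{ε₀}(z) ≤ x`, or `0` if there is none. -/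
noncomputable def FepsInv (x : ℕ) : ℕ :=
  ((Finset.range (x + 1)).filter fun z => Feps z ≤ x).sup id

end SlowCon

namespace SlowCon
open ONote Ordinal

theorem wtower_nf : ∀ n, (wtower n).NF
  | 0 => ONote.NF.oadd NF.zero 1 NFBelow.zero
  | n + 1 => (wtower_nf n).oadd 1 NFBelow.zero

theorem exp_lt {e : ONote} {n a} (_hNF : (ONote.oadd e n a).NF) (_hh : (wtower (x+1)).NF)
    (hlt : ONote.oadd e n a < wtower (x + 2)) : e < wtower (x + 1) := by
  rw [ONote.lt_def] at hlt ⊢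
  have h1 : (ω : Ordinal) ^ e.repr ≤ (ONote.oadd e n a).repr := omega0_le_oadd e n a
  have h2 : (wtower (x + 2)).repr = ω ^ (wtower (x+1)).repr := by
    show (ONote.oadd (wtower (x+1)) 1 0).repr = _
    simp [ONote.repr]
  rw [h2] at hlt
  exact (Ordinal.opow_lt_opow_iff_right one_lt_omega0).1 (lt_of_le_of_lt h1 hlt)

theorem add_eq_oadd {x : ℕ} {α : ONote} (hα : α.NF) (hlt : α < wtower (x + 2)) (h0 : α ≠ 0) :
    wtower (x + 2) + α = ONote.oadd (wtower (x + 1)) 1 α := by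
  cases α with
  | zero => exact absurd rfl h0
  | oadd e n a =>
    have he : e < wtower (x + 1) := exp_lt hα (wtower_nf _) hlt
    have hcmp : ONote.cmp (wtower (x+1)) e = Ordering.gt := by
      have hc := @ONote.cmp_compares (wtower (x+1)) e (wtower_nf _) hα.fst
      cases hcc : ONote.cmp (wtower (x+1)) e
      case lt => rw [hcc] at hc; exact absurd (hc.trans he) (lt_irrefl _)
      case eq => rw [hcc] at hc; exact absurd (hc ▸ he) (lt_irrefl _)
      case gt => rfl
    show ONote.addAux (wtower (x+1)) 1 (0 + ONote.oadd e n a) = _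
    rw [ONote.zero_add]
    show (match ONote.cmp (wtower (x+1)) e with
      | Ordering.lt => ONote.oadd e n a
      | Ordering.eq => ONote.oadd (wtower (x+1)) (1 + n) a
      | Ordering.gt => ONote.oadd (wtower (x+1)) 1 (ONote.oadd e n a)) = _
    rw [hcmp]

theorem add_zero' (x : ℕ) : wtower (x + 2) + 0 = wtower (x + 2) := by
  show ONote.addAux (wtower (x+1)) 1 (0 + 0) = _
  rfl

theorem fs_oadd (h : ONote) (α : ONote) (h0 : α ≠ 0) (k : ℕ) :
    fs (ONote.oadd h 1 α) k = ONote.oadd h 1 (fs α k) := by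
  have hp := fundamentalSequence_has_prop α
  unfold fs
  show (match ONote.fundamentalSequence (ONote.oadd h 1 α) with
    | Sum.inl none => 0 | Sum.inl (some a) => a | Sum.inr f => f k) = _
  rw [ONote.fundamentalSequence]
  cases hfs : ONote.fundamentalSequence α with
  | inl o =>
    cases o with
    | none => rw [hfs] at hp; exact absurd hp h0
    | some b => simp
  | inr f => simp

theorem fs_lt {α : ONote} (h0 : α ≠ 0) (k : ℕ) : fs α k < α := by
  have hp := fundamentalSequence_has_prop α
  unfold fs
  cases hfs : ONote.fundamentalSequence α with
  | inl o =>
    cases o with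
    | none => rw [hfs] at hp; exact absurd hp h0
    | some b =>
      rw [hfs] at hp
      rw [ONote.lt_def, hp.1]
      exact Order.lt_succ _
  | inr f =>
    rw [hfs] at hp
    exact (hp.2.1 k).2.1

theorem fs_nf {α : ONote} (hα : α.NF) (k : ℕ) : (fs α k).NF := by
  have hp := fundamentalSequence_has_prop α
  unfold fs
  cases hfs : ONote.fundamentalSequence α with
  | inl o =>
    cases o with
    | none => exact NF.zero
    | some b => rw [hfs] at hp; exact hp.2 hα
  | inr f => rw [hfs] at hp; exact (hp.2.1 k).2.2 hα

theorem fs_add {x k : ℕ} {α : ONote} (hα : α.NF) (hlt : α < wtower (x + 2)) (h0 : α ≠ 0) :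
    fs (wtower (x + 2) + α) k = wtower (x + 2) + fs α k := by
  rw [add_eq_oadd hα hlt h0, fs_oadd _ _ h0]
  by_cases hz : fs α k = 0
  · rw [hz, add_zero']; rfl
  · rw [add_eq_oadd (fs_nf hα k) (lt_trans (fs_lt h0 k) hlt) hz]

theorem add_ne_zero {x : ℕ} {α : ONote} (hα : α.NF) (hlt : α < wtower (x + 2)) :
    wtower (x + 2) + α ≠ 0 := by
  by_cases h0 : α = 0
  · rw [h0, add_zero']; exact fun h => by cases h
  · rw [add_eq_oadd hα hlt h0]; exact fun h => by cases h

end SlowCon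

/-- if `α` meshes with `ω_{x+2}` (i.e. `α < ω_{x+2}` in normal form) and
`β <_k α`, then `ω_{x+2} + β <_k ω_{x+2} + α`. -/
theorem stmt8 : ∀ (x k : ℕ) (α β : ONote), α.NF → β.NF →
    α < SlowCon.wtower (x + 2) → SlowCon.stepDown k β α →
    SlowCon.stepDown k (SlowCon.wtower (x + 2) + β) (SlowCon.wtower (x + 2) + α) := by
  intro x k α β hα _ hlt hsd
  revert hα hlt
  induction hsd with
  | single h =>
    intro hα hlt
    exact Relation.TransGen.single ⟨SlowCon.add_ne_zero hα hlt,
      by rw [SlowCon.fs_add hα hlt h.1, ← h.2]⟩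
  | tail hbc hca ih =>
    intro hα hlt
    have hc := hca.2
    have hcnf : _root_.ONote.NF _ := hc ▸ SlowCon.fs_nf hα k
    have hclt := hc ▸ lt_trans (SlowCon.fs_lt hca.1 k) hlt
    exact Relation.TransGen.tail (ih hcnf hclt) ⟨SlowCon.add_ne_zero hα hlt,
      by rw [SlowCon.fs_add hα hlt hca.1, ← hc]⟩
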